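/- Let P be a finite lattice, C a class of lattices, and suppose P is ideal-projective with respect to C. Then P is sharply transferable with respect to C: for every L ∈ C and every lattice embedding φ : P → Id L, there is a lattice homomorphism f : P → L with f(x) ∈ φ(x) for all x, such that f(x) ∈ φ(y) implies x ≤ y. -/
import Mathlib


/-- `I` is an ideal of the lattice `L`. -/
def IsLatticeIdeal {L : Type*} [Lattice L] (I : Set L) : Prop :=
  I.Nonempty ∧ (∀ a b : L, a ≤ b → b ∈ I → a ∈ I) ∧ (∀ a b : L, a ∈ I → b ∈ I → a ⊔ b ∈ I)

/-- The join of two ideals, as sets. -/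
def idealJoin {L : Type*} [Lattice L] (A B : Set L) : Set L :=
  {x | ∃ a ∈ A, ∃ b ∈ B, x ≤ a ⊔ b}

/-- `φ : P → Id L` is a lattice homomorphism into the ideal lattice of `L`. -/
def IsIdealHom {P L : Type*} [Lattice P] [Lattice L] (φ : P → Set L) : Prop :=
  (∀ x : P, IsLatticeIdeal (φ x)) ∧
  (∀ x y : P, φ (x ⊓ y) = φ x ∩ φ y) ∧
  (∀ x y : P, φ (x ⊔ y) = idealJoin (φ x) (φ y))

/-- If a finite lattice `P` is ideal-projective with respect to a class `C` of
lattices, then `P` is sharply transferable with respect to `C`: for every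
`L ∈ C` and every lattice embedding `φ : P ↪ Id L` there is a choice lattice
homomorphism `f : P → L` for `φ` with `f x ∈ φ y → x ≤ y`. -/
theorem sharply_transferable_of_ideal_projective.{u}
    {P : Type*} [Lattice P] [Fintype P]
    (C : (L : Type u) → Lattice L → Prop)
    -- `P` is ideal-projective with respect to `C`:
    (hIP : ∀ (L : Type u) [instL : Lattice L], C L instL →
      ∀ φ : P → Set L, IsIdealHom φ →
        ∀ f₀ : P → L, (∀ x : P, f₀ x ∈ φ x) →
          ∃ f : P → L, (∀ x y : P, f (x ⊔ y) = f x ⊔ f y) ∧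
            (∀ x y : P, f (x ⊓ y) = f x ⊓ f y) ∧
            (∀ x : P, f x ∈ φ x) ∧ (∀ x : P, f₀ x ≤ f x)) :
    -- `P` is sharply transferable with respect to `C`:
    ∀ (L : Type u) [instL : Lattice L], C L instL →
      ∀ φ : P → Set L, IsIdealHom φ → (∀ x y : P, x ≤ y ↔ φ x ⊆ φ y) →
        ∃ f : P → L, (∀ x y : P, f (x ⊔ y) = f x ⊔ f y) ∧
          (∀ x y : P, f (x ⊓ y) = f x ⊓ f y) ∧
          (∀ x : P, f x ∈ φ x) ∧
          (∀ x y : P, f x ∈ φ y → x ≤ y) := by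
  intro L instL hC φ hφ hemb
  classical
  rcases isEmpty_or_nonempty P with h | h
  · exact ⟨fun x => isEmptyElim x, fun x => isEmptyElim x, fun x => isEmptyElim x,
      fun x => isEmptyElim x, fun x => isEmptyElim x⟩
  obtain ⟨hid, hinf, hsup⟩ := hφ
  have hdiff : ∀ x y : P, ¬ x ≤ y → (φ x \ φ y).Nonempty := by
    intro x y hxy
    rw [Set.diff_nonempty]
    exact fun hsub => hxy ((hemb x y).mpr hsub)
  set g : P → P → L := fun x y =>
    if h : x ≤ y then (hid x).1.choose else (hdiff x y h).choose with hg
  have hg1 : ∀ x y : P, g x y ∈ φ x := by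
    intro x y
    by_cases h : x ≤ y
    · simp only [hg, dif_pos h]; exact (hid x).1.choose_spec
    · simp only [hg, dif_neg h]; exact (hdiff x y h).choose_spec.1
  have hg2 : ∀ x y : P, ¬ x ≤ y → g x y ∉ φ y := by
    intro x y h
    simp only [hg, dif_neg h]
    exact (hdiff x y h).choose_spec.2
  set f₀ : P → L := fun x => Finset.univ.sup' Finset.univ_nonempty (g x) with hf₀
  have hf₀mem : ∀ x : P, f₀ x ∈ φ x := by
    intro x
    exact Finset.sup'_induction _ _ (fun a ha b hb => (hid x).2.2 a b ha hb)
      (fun y _ => hg1 x y)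
  have hf₀not : ∀ x y : P, ¬ x ≤ y → f₀ x ∉ φ y := by
    intro x y h hmem
    exact hg2 x y h ((hid y).2.1 _ _ (Finset.le_sup' (g x) (Finset.mem_univ y)) hmem)
  obtain ⟨f, h1, h2, h3, h4⟩ := hIP L hC φ ⟨hid, hinf, hsup⟩ f₀ hf₀mem
  refine ⟨f, h1, h2, h3, fun x y hxy => ?_⟩
  by_contra h
  exact hf₀not x y h ((hid y).2.1 _ _ (h4 x) hxy)
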